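/- arXiv:0912.5151 — 3 statements merged into one kernel-verified Lean document; each statement's English description precedes it below -/
import Mathlib

section
/- For all real μ > −1/2, ν > −1/2 and every a > 0, ∫_0^a x^μ (a−x)^ν I_μ(x) I_ν(a−x) dx = (Γ(μ+1/2)Γ(ν+1/2)/(√(2π) · Γ(μ+ν+1))) · a^{μ+ν+1/2} · I_{μ+ν+1/2}(a) (the semigroup-type property of modified Bessel functions). -/
open MeasureTheory Real Finset
open scoped Nat

/-!
By Legendre's duplication formula, `x ^ ν * I_ν(x)` is the series
`(2 ^ ν / √π) ∑ₖ Γ(ν + 1/2 + k) / k! · x ^ (2k + 2ν) / Γ(2k + 2ν + 1)`.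
The normalized powers `x ^ p / Γ(p + 1)` are closed under the convolution `∫₀ᵃ f(x) g(a - x) dx`
(this is Euler's Beta integral), so integrating the product of two such series term by term (all
terms are nonnegative) gives a series of the same shape whose coefficients are antidiagonal sums
`∑_{i+j=n} Γ(α + i) / i! · Γ(β + j) / j!`. The Chu–Vandermonde identity evaluates these, and the
result is again the series of `a ^ (μ + ν + 1/2) I_{μ+ν+1/2}(a)`.
-/

/-- The modified Bessel function of the first kind of order `ν`, defined by its series. -/
noncomputable def besselI (ν x : ℝ) : ℝ :=
  ∑' k : ℕ, (x / 2) ^ (2 * (k : ℝ) + ν) /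
    (Real.Gamma ((k : ℝ) + 1) * Real.Gamma ((k : ℝ) + ν + 1))

theorem Ring.multichoose_add_eq {R : Type*} [CommRing R] [BinomialRing R] [NatPowAssoc R]
    (r s : R) (n : ℕ) :
    Ring.multichoose (r + s) n =
      ∑ ij ∈ antidiagonal n, Ring.multichoose r ij.1 * Ring.multichoose s ij.2 := by
  -- Chu–Vandermonde at `-r, -s`, where `choose (-r) k = (-1) ^ k • multichoose r k`.
  have h := Ring.add_choose_eq n (Commute.all (-r) (-s))
  rw [← neg_add, Ring.choose_neg'] at h
  have hsign : ∀ ij ∈ antidiagonal n, Ring.choose (-r) ij.1 * Ring.choose (-s) ij.2 =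
      Int.negOnePow n • (Ring.multichoose r ij.1 * Ring.multichoose s ij.2) := by
    intro ij hij
    rw [Ring.choose_neg', Ring.choose_neg', smul_mul_smul_comm, ← Int.negOnePow_add,
      ← Nat.cast_add, mem_antidiagonal.mp hij]
  rw [sum_congr rfl hsign, ← smul_sum] at h
  exact smul_left_cancel _ h

theorem Real.Gamma_add_nat_eq_factorial_mul_multichoose {α : ℝ} (hα : 0 < α) (k : ℕ) :
    Gamma (α + k) = k ! * Ring.multichoose α k * Gamma α := by
  rw [← nsmul_eq_mul, Ring.factorial_nsmul_multichoose_eq_ascPochhammer,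
    Polynomial.ascPochhammer_smeval_eq_eval]
  induction k with
  | zero => simp
  | succ k ih =>
    rw [Nat.cast_succ, ← add_assoc, Gamma_add_one (by positivity), ih, ascPochhammer_succ_eval]
    ring

theorem Real.sum_antidiagonal_Gamma_add_div_factorial {α β : ℝ} (hα : 0 < α) (hβ : 0 < β)
    (n : ℕ) :
    ∑ ij ∈ antidiagonal n, Gamma (α + ij.1) / ij.1 ! * (Gamma (β + ij.2) / ij.2 !) =
      Gamma α * Gamma β / Gamma (α + β) * (Gamma (α + β + n) / n !) := by
  have hdiv : ∀ {γ : ℝ}, 0 < γ → ∀ k : ℕ,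
      Gamma (γ + k) / k ! = Ring.multichoose γ k * Gamma γ := fun hγ k => by
    rw [Gamma_add_nat_eq_factorial_mul_multichoose hγ, mul_assoc, mul_div_cancel_left₀]
    positivity
  simp only [hdiv hα, hdiv hβ, hdiv (add_pos hα hβ), Ring.multichoose_add_eq, sum_mul, mul_sum]
  refine sum_congr rfl fun ij _ => ?_
  field_simp

theorem intervalIntegrable_rpow_mul_sub_rpow {p q a : ℝ} (hp : -1 < p) (hq : -1 < q)
    (ha : 0 < a) :
    IntervalIntegrable (fun x => x ^ p * (a - x) ^ q) volume 0 a := by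
  have hleft : IntervalIntegrable (fun x => x ^ p * (a - x) ^ q) volume 0 (a / 2) := by
    refine (intervalIntegral.intervalIntegrable_rpow' hp).mul_continuousOn ?_
    refine ContinuousOn.rpow_const (by fun_prop) fun x hx => Or.inl ?_
    rw [Set.uIcc_of_le (by linarith)] at hx
    linarith [hx.2]
  have hright : IntervalIntegrable (fun x => x ^ p * (a - x) ^ q) volume (a / 2) a := by
    refine IntervalIntegrable.continuousOn_mul ?_ ?_
    · have := (intervalIntegral.intervalIntegrable_rpow' (a := 0) (b := a / 2) hq).comp_sub_left a
      rw [sub_zero, sub_half] at this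
      exact this.symm
    · refine ContinuousOn.rpow_const (by fun_prop) fun x hx => Or.inl ?_
      rw [Set.uIcc_of_le (by linarith)] at hx
      linarith [hx.1]
  exact hleft.trans hright

theorem integral_rpow_mul_sub_rpow {p q a : ℝ} (hp : -1 < p) (hq : -1 < q) (ha : 0 < a) :
    ∫ x in 0..a, x ^ p * (a - x) ^ q =
      a ^ (p + q + 1) * (Gamma (p + 1) * Gamma (q + 1) / Gamma (p + q + 2)) := by
  have hbeta := Complex.betaIntegral_scaled (p + 1 : ℝ) (q + 1 : ℝ) ha
  have hGamma := Complex.Gamma_mul_Gamma_eq_betaIntegral (s := (p + 1 : ℝ)) (t := (q + 1 : ℝ))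
    (by simp; linarith) (by simp; linarith)
  have hne : Gamma (p + q + 2) ≠ 0 := (Gamma_pos_of_pos (by linarith)).ne'
  apply Complex.ofReal_injective
  rw [← intervalIntegral.integral_ofReal]
  have hcongr : ∫ x in 0..a, ((x ^ p * (a - x) ^ q : ℝ) : ℂ) =
      ∫ x in 0..a,
        (x : ℂ) ^ ((p + 1 : ℝ) - 1 : ℂ) * ((a : ℂ) - x) ^ ((q + 1 : ℝ) - 1 : ℂ) := by
    refine intervalIntegral.integral_congr fun x hx => ?_
    rw [Set.uIcc_of_le ha.le] at hx
    simp only [Complex.ofReal_mul, Complex.ofReal_cpow hx.1, Complex.ofReal_add,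
      Complex.ofReal_one, add_sub_cancel_right]
    rw [Complex.ofReal_cpow (by linarith [hx.2]), Complex.ofReal_sub]
  have hexp : ((p + 1 : ℝ) : ℂ) + ((q + 1 : ℝ) : ℂ) - 1 = ((p + q + 1 : ℝ) : ℂ) := by
    push_cast; ring
  have hsum : ((p + 1 : ℝ) : ℂ) + ((q + 1 : ℝ) : ℂ) = ((p + q + 2 : ℝ) : ℂ) := by
    push_cast; ring
  rw [hsum, Complex.Gamma_ofReal, Complex.Gamma_ofReal, Complex.Gamma_ofReal] at hGamma
  rw [hcongr, hbeta, hexp, ← Complex.ofReal_cpow ha.le, Complex.ofReal_mul, Complex.ofReal_div,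
    Complex.ofReal_mul, hGamma, mul_div_cancel_left₀ _ (Complex.ofReal_ne_zero.mpr hne)]

theorem integral_rpow_div_Gamma_mul_sub_rpow_div_Gamma {p q a : ℝ} (hp : -1 < p) (hq : -1 < q)
    (ha : 0 < a) :
    ∫ x in 0..a, x ^ p / Gamma (p + 1) * ((a - x) ^ q / Gamma (q + 1)) =
      a ^ (p + q + 1) / Gamma (p + q + 1 + 1) := by
  have hp' : Gamma (p + 1) ≠ 0 := (Gamma_pos_of_pos (by linarith)).ne'
  have hq' : Gamma (q + 1) ≠ 0 := (Gamma_pos_of_pos (by linarith)).ne'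
  simp_rw [div_mul_div_comm, intervalIntegral.integral_div, integral_rpow_mul_sub_rpow hp hq ha,
    add_assoc, one_add_one_eq_two]
  field_simp

theorem MeasureTheory.integral_tsum_of_nonneg {α : Type*} [MeasurableSpace α] {μ : Measure α}
    {F : ℕ → α → ℝ} {S : ℝ} (hint : ∀ n, Integrable (F n) μ) (hF : ∀ n, 0 ≤ᵐ[μ] F n)
    (hS : HasSum (fun n => ∫ x, F n x ∂μ) S) :
    ∫ x, ∑' n, F n x ∂μ = S := by
  have hnorm : ∀ n, ∫ x, ‖F n x‖ ∂μ = ∫ x, F n x ∂μ := fun n =>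
    integral_congr_ae <| (hF n).mono fun x hx => Real.norm_of_nonneg hx
  rw [← integral_tsum_of_summable_integral_norm hint (by simpa only [hnorm] using hS.summable),
    hS.tsum_eq]

theorem rpow_div_Gamma_nonneg {p x : ℝ} (hp : -1 < p) (hx : 0 ≤ x) :
    0 ≤ x ^ p / Gamma (p + 1) :=
  div_nonneg (rpow_nonneg hx p) (Gamma_pos_of_pos (by linarith)).le

theorem integral_mul_sub_eq_of_hasSum {a α β S : ℝ} {b c : ℕ → ℝ} {f g : ℝ → ℝ}
    (ha : 0 < a) (hα : -1 < α) (hβ : -1 < β) (hb : ∀ k, 0 ≤ b k) (hc : ∀ k, 0 ≤ c k)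
    (hf : ∀ x ∈ Set.Ioo 0 a,
      HasSum (fun k : ℕ => b k * (x ^ (2 * k + α) / Gamma (2 * k + α + 1))) (f x))
    (hg : ∀ x ∈ Set.Ioo 0 a,
      HasSum (fun k : ℕ => c k * (x ^ (2 * k + β) / Gamma (2 * k + β + 1))) (g x))
    (hS : HasSum (fun n : ℕ => (∑ ij ∈ antidiagonal n, b ij.1 * c ij.2) *
        (a ^ (2 * n + (α + β + 1)) / Gamma (2 * n + (α + β + 1) + 1))) S) :
    ∫ x in 0..a, f x * g (a - x) = S := by
  have hαk (k : ℕ) : -1 < 2 * (k : ℝ) + α := by linarith [k.cast_nonneg (α := ℝ)]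
  have hβk (k : ℕ) : -1 < 2 * (k : ℝ) + β := by linarith [k.cast_nonneg (α := ℝ)]
  set F : ℕ → ℝ → ℝ := fun n x => ∑ ij ∈ antidiagonal n, b ij.1 * c ij.2 *
      (x ^ (2 * ij.1 + α) / Gamma (2 * ij.1 + α + 1) *
        ((a - x) ^ (2 * ij.2 + β) / Gamma (2 * ij.2 + β + 1))) with hF
  have hterm_int : ∀ i j : ℕ, IntervalIntegrable (fun x => b i * c j *
      (x ^ (2 * i + α) / Gamma (2 * i + α + 1) *
        ((a - x) ^ (2 * j + β) / Gamma (2 * j + β + 1)))) volume 0 a := fun i j => by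
    have := (intervalIntegrable_rpow_mul_sub_rpow (hαk i) (hβk j) ha).div_const
      (Gamma (2 * i + α + 1) * Gamma (2 * j + β + 1))
    simp only [← div_mul_div_comm] at this
    exact this.const_mul _
  have hF_int : ∀ n, IntervalIntegrable (F n) volume 0 a := fun n => by
    simpa only [Finset.sum_fn] using
      IntervalIntegrable.sum (antidiagonal n) fun ij _ => hterm_int ij.1 ij.2
  have hF_val : ∀ n, ∫ x in 0..a, F n x = (∑ ij ∈ antidiagonal n, b ij.1 * c ij.2) *
      (a ^ (2 * n + (α + β + 1)) / Gamma (2 * n + (α + β + 1) + 1)) := fun n => by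
    simp only [hF]
    rw [intervalIntegral.integral_finsetSum fun ij _ => hterm_int ij.1 ij.2, sum_mul]
    refine sum_congr rfl fun ij hij => ?_
    have hn : (2 * ij.1 + α) + (2 * ij.2 + β) + 1 = 2 * (n : ℝ) + (α + β + 1) := by
      rw [← mem_antidiagonal.mp hij]; push_cast; ring
    rw [intervalIntegral.integral_const_mul,
      integral_rpow_div_Gamma_mul_sub_rpow_div_Gamma (hαk _) (hβk _) ha, hn]
  have hF_nonneg : ∀ n, ∀ x ∈ Set.Ioo 0 a, 0 ≤ F n x := fun n x hx =>
    sum_nonneg fun ij _ => mul_nonneg (mul_nonneg (hb _) (hc _)) (mul_nonneg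
      (rpow_div_Gamma_nonneg (hαk _) hx.1.le)
      (rpow_div_Gamma_nonneg (hβk _) (sub_pos.2 hx.2).le))
  have hF_sum : ∀ x ∈ Set.Ioo 0 a, f x * g (a - x) = ∑' n, F n x := fun x hx => by
    have hx' : a - x ∈ Set.Ioo 0 a := ⟨sub_pos.2 hx.2, sub_lt_self a hx.1⟩
    rw [← (hf x hx).tsum_eq, ← (hg _ hx').tsum_eq,
      tsum_mul_tsum_eq_tsum_sum_antidiagonal_of_summable_norm (hf x hx).summable.norm
        (hg _ hx').summable.norm]
    exact tsum_congr fun n => sum_congr rfl fun ij _ => by ring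
  rw [intervalIntegral.integral_of_le ha.le, integral_Ioc_eq_integral_Ioo,
    setIntegral_congr_fun measurableSet_Ioo hF_sum]
  refine integral_tsum_of_nonneg (fun n => (hF_int n).1.mono_set Set.Ioo_subset_Ioc_self)
    (fun n => (ae_restrict_mem measurableSet_Ioo).mono fun x hx => hF_nonneg n x hx) ?_
  have hF_val' : ∀ n, ∫ x in Set.Ioo 0 a, F n x = _ := fun n => by
    rw [← integral_Ioc_eq_integral_Ioo, ← intervalIntegral.integral_of_le ha.le, hF_val n]
  simpa only [hF_val'] using hS

theorem Real.one_le_Gamma {x : ℝ} (hx : 2 ≤ x) : 1 ≤ Gamma x :=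
  Gamma_two ▸ Gamma_strictMonoOn_Ici.monotoneOn Set.self_mem_Ici hx hx

theorem summable_besselI_series {ν x : ℝ} (hx : 0 < x) :
    Summable fun k : ℕ =>
      (x / 2) ^ (2 * (k : ℝ) + ν) / (Gamma (k + 1) * Gamma (k + ν + 1)) := by
  have hterm (k : ℕ) : (x / 2) ^ (2 * (k : ℝ) + ν) = (x / 2) ^ ν * ((x / 2) ^ 2) ^ k := by
    rw [rpow_add (by positivity), ← pow_mul, ← rpow_natCast, mul_comm]; push_cast; ring_nf
  refine Summable.of_norm_bounded_eventually_nat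
    ((Real.summable_pow_div_factorial ((x / 2) ^ 2)).mul_left ((x / 2) ^ ν)) ?_
  filter_upwards [Filter.eventually_ge_atTop ⌈1 - ν⌉₊] with k hk
  have hΓ : 1 ≤ Gamma (k + ν + 1) := one_le_Gamma (by linarith [Nat.ceil_le.mp hk])
  rw [hterm, Gamma_nat_eq_factorial, norm_of_nonneg (by positivity), mul_div_assoc]
  gcongr
  exact le_mul_of_one_le_right (by positivity) hΓ

noncomputable def besselCoeff (ν : ℝ) (k : ℕ) : ℝ :=
  2 ^ ν / √π * (Gamma (ν + 1 / 2 + k) / k !)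

theorem besselCoeff_nonneg {ν : ℝ} (hν : -1 / 2 < ν) (k : ℕ) : 0 ≤ besselCoeff ν k := by
  have := Gamma_pos_of_pos (by linarith [k.cast_nonneg (α := ℝ)] : 0 < ν + 1 / 2 + k)
  unfold besselCoeff
  positivity

theorem rpow_mul_besselI_term {ν x : ℝ} (hν : -1 / 2 < ν) (hx : 0 < x) (k : ℕ) :
    x ^ ν * ((x / 2) ^ (2 * (k : ℝ) + ν) / (Gamma (k + 1) * Gamma (k + ν + 1))) =
      besselCoeff ν k * (x ^ (2 * (k : ℝ) + 2 * ν) / Gamma (2 * k + 2 * ν + 1)) := by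
  have hdup := Gamma_mul_Gamma_add_half (ν + 1 / 2 + k)
  rw [show ν + 1 / 2 + k + 1 / 2 = k + ν + 1 by ring,
    show 2 * (ν + 1 / 2 + k) = 2 * k + 2 * ν + 1 by ring,
    show 1 - (2 * k + 2 * ν + 1) = -(2 * (k : ℝ) + 2 * ν) by ring, rpow_neg zero_le_two] at hdup
  have hG : Gamma (2 * k + 2 * ν + 1) =
      Gamma (ν + 1 / 2 + k) * Gamma (k + ν + 1) * 2 ^ (2 * (k : ℝ) + 2 * ν) / √π := by
    rw [hdup]
    field_simp
  have hx_pow : x ^ ν * x ^ (2 * (k : ℝ) + ν) = x ^ (2 * (k : ℝ) + 2 * ν) := by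
    rw [← rpow_add hx]; ring_nf
  have h2_pow : (2 : ℝ) ^ (2 * (k : ℝ) + 2 * ν) = 2 ^ ν * 2 ^ (2 * (k : ℝ) + ν) := by
    rw [← rpow_add two_pos]; ring_nf
  have h1 := Gamma_pos_of_pos (by linarith [k.cast_nonneg (α := ℝ)] : 0 < ν + 1 / 2 + k)
  rw [hG, div_rpow hx.le zero_le_two, besselCoeff, Gamma_nat_eq_factorial, ← hx_pow, h2_pow]
  generalize Gamma (ν + 1 / 2 + k) = g at h1 ⊢
  field_simp

theorem hasSum_rpow_mul_besselI {ν x : ℝ} (hν : -1 / 2 < ν) (hx : 0 < x) :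
    HasSum (fun k : ℕ => besselCoeff ν k * (x ^ (2 * (k : ℝ) + 2 * ν) / Gamma (2 * k + 2 * ν + 1)))
      (x ^ ν * besselI ν x) := by
  simp_rw [← rpow_mul_besselI_term hν hx]
  exact (summable_besselI_series hx).hasSum.mul_left (x ^ ν)

theorem sum_antidiagonal_besselCoeff {μ ν : ℝ} (hμ : -1 / 2 < μ) (hν : -1 / 2 < ν) (n : ℕ) :
    ∑ ij ∈ antidiagonal n, besselCoeff μ ij.1 * besselCoeff ν ij.2 =
      Gamma (μ + 1 / 2) * Gamma (ν + 1 / 2) / (√(2 * π) * Gamma (μ + ν + 1)) *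
        besselCoeff (μ + ν + 1 / 2) n := by
  have hV := sum_antidiagonal_Gamma_add_div_factorial (by linarith : 0 < μ + 1 / 2)
    (by linarith : 0 < ν + 1 / 2) n
  rw [show μ + 1 / 2 + (ν + 1 / 2) = μ + ν + 1 by ring] at hV
  have hterm : ∀ ij : ℕ × ℕ, besselCoeff μ ij.1 * besselCoeff ν ij.2 =
      2 ^ μ / √π * (2 ^ ν / √π) *
        (Gamma (μ + 1 / 2 + ij.1) / ij.1 ! * (Gamma (ν + 1 / 2 + ij.2) / ij.2 !)) := fun _ => by
    unfold besselCoeff; ring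
  have h2 : (2 : ℝ) ^ (μ + ν + 1 / 2) = 2 ^ μ * 2 ^ ν * √2 := by
    rw [sqrt_eq_rpow, ← rpow_add two_pos, ← rpow_add two_pos]
  rw [sum_congr rfl fun ij _ => hterm ij, ← mul_sum, hV, besselCoeff,
    show μ + ν + 1 / 2 + 1 / 2 = μ + ν + 1 by ring, h2, sqrt_mul zero_le_two]
  field_simp

/-- The semigroup-type property of modified Bessel functions:
`∫_0^a x^μ (a−x)^ν I_μ(x) I_ν(a−x) dx
  = (Γ(μ+1/2)Γ(ν+1/2)/(√(2π) Γ(μ+ν+1))) a^{μ+ν+1/2} I_{μ+ν+1/2}(a)`. -/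
theorem stmt2 (μ ν a : ℝ) (hμ : -1 / 2 < μ) (hν : -1 / 2 < ν) (ha : 0 < a) :
    ∫ x in (0 : ℝ)..a, x ^ μ * (a - x) ^ ν * besselI μ x * besselI ν (a - x) =
    Real.Gamma (μ + 1 / 2) * Real.Gamma (ν + 1 / 2) /
        (Real.sqrt (2 * π) * Real.Gamma (μ + ν + 1)) *
      a ^ (μ + ν + 1 / 2) * besselI (μ + ν + 1 / 2) a := by
  set C := Gamma (μ + 1 / 2) * Gamma (ν + 1 / 2) / (√(2 * π) * Gamma (μ + ν + 1))
  have hS : HasSum (fun n : ℕ => (∑ ij ∈ antidiagonal n, besselCoeff μ ij.1 * besselCoeff ν ij.2) *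
      (a ^ (2 * n + (2 * μ + 2 * ν + 1)) / Gamma (2 * n + (2 * μ + 2 * ν + 1) + 1)))
      (C * (a ^ (μ + ν + 1 / 2) * besselI (μ + ν + 1 / 2) a)) := by
    refine ((hasSum_rpow_mul_besselI (by linarith : -1 / 2 < μ + ν + 1 / 2) ha).mul_left C
      ).congr_fun fun n => ?_
    rw [sum_antidiagonal_besselCoeff hμ hν, mul_assoc,
      show 2 * (μ + ν + 1 / 2) = 2 * μ + 2 * ν + 1 by ring]
  calc ∫ x in (0 : ℝ)..a, x ^ μ * (a - x) ^ ν * besselI μ x * besselI ν (a - x)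
      = ∫ x in (0 : ℝ)..a, x ^ μ * besselI μ x * ((a - x) ^ ν * besselI ν (a - x)) := by
        congr 1; ext x; ring
    _ = C * (a ^ (μ + ν + 1 / 2) * besselI (μ + ν + 1 / 2) a) :=
        integral_mul_sub_eq_of_hasSum ha (by linarith) (by linarith) (besselCoeff_nonneg hμ)
          (besselCoeff_nonneg hν) (fun x hx => hasSum_rpow_mul_besselI hμ hx.1)
          (fun x hx => hasSum_rpow_mul_besselI hν hx.1) hS
    _ = _ := by ring
end

section
/- For all λ > 0, c > 0, t > 0 and every real x with |x| < ct, setting y = (λ/c)·√(c²t² − x²) one has (λ e^{−λt}/(2c)) · ∑_{k=0}^∞ ((λ/(2c))√(c²t² − x²))^{k−1} / Γ((k+1)/2)² = (λ e^{−λt}/(2c)) · [I_0(y) + L_0(y)] + e^{−λt}/(π√(c²t² − x²)). (This is the closed form of the unconditional density law p^0(x,t) of the random motion X_0(t).) -/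
open MeasureTheory Real

/-- The modified Struve function of order `μ`, defined by its series. -/
noncomputable def struveL (μ x : ℝ) : ℝ :=
  ∑' k : ℕ, (x / 2) ^ (2 * (k : ℝ) + μ + 1) /
    (Real.Gamma ((k : ℝ) + 3 / 2) * Real.Gamma ((k : ℝ) + μ + 3 / 2))

/-
Splitting the series according to the parity of `k`, the odd terms are exactly the series of
`I₀(2z)` and the even terms with `k ≥ 2` that of `L₀(2z)`, where `z = (λ/(2c))√(c²t²−x²)`.
The remaining term `k = 0` is `z⁻¹ / Γ(1/2)² = 1/(πz)`, which produces `e^{−λt}/(π√(c²t²−x²))`.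
-/

lemma summable_rpow_div_Gamma_sq {z : ℝ} (hz : 0 < z) (a : ℝ) {b : ℝ} (hb : 0 < b) :
    Summable fun m : ℕ => z ^ (2 * (m : ℝ) + a) / Gamma (m + b) ^ 2 := by
  refine summable_of_ratio_norm_eventually_le (r := 1 / 2) (by norm_num) ?_
  filter_upwards [Filter.eventually_ge_atTop ⌈2 * z⌉₊] with m hm
  have hmz : 2 * z ≤ m := (Nat.le_ceil _).trans (by exact_mod_cast hm)
  have hmb : 0 < (m : ℝ) + b := by positivity
  have hterm : 0 < z ^ (2 * (m : ℝ) + a) / Gamma (m + b) ^ 2 := by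
    have := Gamma_pos_of_pos hmb
    positivity
  have hnext : z ^ (2 * ((m + 1 : ℕ) : ℝ) + a) / Gamma ((m + 1 : ℕ) + b) ^ 2
      = z ^ 2 / (m + b) ^ 2 * (z ^ (2 * (m : ℝ) + a) / Gamma (m + b) ^ 2) := by
    rw [Nat.cast_succ, show 2 * ((m : ℝ) + 1) + a = 2 + (2 * m + a) by ring, rpow_add hz,
      show (m : ℝ) + 1 + b = m + b + 1 by ring, Gamma_add_one hmb.ne', rpow_two]
    field_simp
  have hratio : z ^ 2 / ((m : ℝ) + b) ^ 2 ≤ 1 / 2 := by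
    rw [div_le_div_iff₀ (by positivity) (by norm_num)]
    nlinarith
  rw [Real.norm_eq_abs, Real.norm_eq_abs, hnext, abs_of_pos hterm, abs_of_pos (by positivity)]
  exact mul_le_mul_of_nonneg_right hratio hterm.le

lemma besselI_zero_two_mul (z : ℝ) :
    besselI 0 (2 * z) = ∑' m : ℕ, z ^ (2 * (m : ℝ) + 0) / Gamma (m + 1) ^ 2 := by
  unfold besselI
  congr 1 with m
  rw [mul_div_cancel_left₀ z two_ne_zero, add_zero, add_zero, sq]

lemma struveL_zero_two_mul (z : ℝ) :
    struveL 0 (2 * z) = ∑' m : ℕ, z ^ (2 * (m : ℝ) + 1) / Gamma (m + 3 / 2) ^ 2 := by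
  unfold struveL
  congr 1 with m
  rw [mul_div_cancel_left₀ z two_ne_zero, add_zero, add_zero, sq]

theorem tsum_rpow_sub_one_div_Gamma_half_sq {z : ℝ} (hz : 0 < z) :
    ∑' k : ℕ, z ^ ((k : ℝ) - 1) / Gamma (((k : ℝ) + 1) / 2) ^ 2 =
      1 / (π * z) + struveL 0 (2 * z) + besselI 0 (2 * z) := by
  set f : ℕ → ℝ := fun k => z ^ ((k : ℝ) - 1) / Gamma (((k : ℝ) + 1) / 2) ^ 2
  have heven : ∀ m : ℕ, f (2 * m) = z ^ (2 * (m : ℝ) + -1) / Gamma (m + 1 / 2) ^ 2 := by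
    intro m; simp only [f]; push_cast; ring_nf
  have hodd : ∀ m : ℕ, f (2 * m + 1) = z ^ (2 * (m : ℝ) + 0) / Gamma (m + 1) ^ 2 := by
    intro m; simp only [f]; push_cast; ring_nf
  have hshift : ∀ m : ℕ, f (2 * (m + 1)) = z ^ (2 * (m : ℝ) + 1) / Gamma (m + 3 / 2) ^ 2 := by
    intro m; simp only [f]; push_cast; ring_nf
  have hzero : f 0 = 1 / (π * z) := by
    simp only [f]
    rw [Nat.cast_zero, zero_sub, rpow_neg_one, zero_add, Gamma_one_half_eq,
      sq_sqrt pi_pos.le]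
    field_simp
  have hse : Summable fun m : ℕ => f (2 * m) := by
    simpa only [heven] using summable_rpow_div_Gamma_sq hz (-1) (by norm_num : (0 : ℝ) < 1 / 2)
  have hso : Summable fun m : ℕ => f (2 * m + 1) := by
    simpa only [hodd] using summable_rpow_div_Gamma_sq hz 0 one_pos
  rw [← tsum_even_add_odd hse hso, hse.tsum_eq_zero_add, Nat.mul_zero, hzero,
    struveL_zero_two_mul, besselI_zero_two_mul]
  simp only [hshift, hodd]

theorem stmt8_general (lam c t x : ℝ) (hlam : 0 < lam) (hc : 0 < c)
    (hx : |x| < c * t) :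
    lam * Real.exp (-lam * t) / (2 * c) *
      ∑' k : ℕ, (lam / (2 * c) * Real.sqrt (c ^ 2 * t ^ 2 - x ^ 2)) ^ ((k : ℝ) - 1) /
        Real.Gamma (((k : ℝ) + 1) / 2) ^ 2 =
    lam * Real.exp (-lam * t) / (2 * c) *
        (besselI 0 (lam / c * Real.sqrt (c ^ 2 * t ^ 2 - x ^ 2)) +
         struveL 0 (lam / c * Real.sqrt (c ^ 2 * t ^ 2 - x ^ 2))) +
      Real.exp (-lam * t) / (π * Real.sqrt (c ^ 2 * t ^ 2 - x ^ 2)) := by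
  set s := Real.sqrt (c ^ 2 * t ^ 2 - x ^ 2)
  have hs : 0 < s := by
    have : |x| ^ 2 < (c * t) ^ 2 := pow_lt_pow_left₀ hx (abs_nonneg x) two_ne_zero
    rw [sq_abs] at this
    exact sqrt_pos.mpr (by linarith)
  have hz : 0 < lam / (2 * c) * s := by positivity
  have h2z : lam / c * s = 2 * (lam / (2 * c) * s) := by field_simp
  rw [tsum_rpow_sub_one_div_Gamma_half_sq hz, h2z]
  field_simp
  ring

/-- Closed form of the unconditional density law `p^0(x,t)` of the random motion `X_0(t)`:
with `y = (λ/c)√(c²t²−x²)`,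
`(λe^{−λt}/(2c)) ∑_k ((λ/(2c))√(c²t²−x²))^{k−1}/Γ((k+1)/2)²
  = (λe^{−λt}/(2c))[I_0(y) + L_0(y)] + e^{−λt}/(π√(c²t²−x²))`. -/
theorem stmt8 (lam c t x : ℝ) (hlam : 0 < lam) (hc : 0 < c) (ht : 0 < t)
    (hx : |x| < c * t) :
    lam * Real.exp (-lam * t) / (2 * c) *
      ∑' k : ℕ, (lam / (2 * c) * Real.sqrt (c ^ 2 * t ^ 2 - x ^ 2)) ^ ((k : ℝ) - 1) /
        Real.Gamma (((k : ℝ) + 1) / 2) ^ 2 =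
    lam * Real.exp (-lam * t) / (2 * c) *
        (besselI 0 (lam / c * Real.sqrt (c ^ 2 * t ^ 2 - x ^ 2)) +
         struveL 0 (lam / c * Real.sqrt (c ^ 2 * t ^ 2 - x ^ 2))) +
      Real.exp (-lam * t) / (π * Real.sqrt (c ^ 2 * t ^ 2 - x ^ 2)) :=
  stmt8_general lam c t x hlam hc hx
end

section
/- Let p^0(x,t) = (λe^{−λt}/(2c)) · ∑_{k=0}^∞ ((λ/(2c))√(c²t² − x²))^{k−1}/Γ((k+1)/2)² for |x| < ct, with λ, c, t > 0. Then for every even positive integer p, ∫_{−ct}^{ct} x^p · p^0(x,t) dx = e^{−λt}·(2/(λt))^{(p−1)/2}·(ct)^p·Γ((p+1)/2)·[I_{(p+1)/2}(λt) + L_{(p+1)/2}(λt)] + e^{−λt}·(ct)^p·Γ((p+1)/2)/(√π·Γ(p/2+1)), while for every odd positive integer p the integral equals 0. (These are the p-th moments of the random motion X_0(t).) -/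
/-!
Expanding `p0` termwise, the `k`-th term is a multiple of `(c²t² - x²) ^ ((k - 1) / 2)`. Against
`x ^ p` its integral over `(0, ct)` becomes, after `x = ct √u`, the Beta integral
`(ct) ^ (p + k) B((p + 1) / 2, (k + 1) / 2) / 2`. All terms are nonnegative, so sum and integral
commute, and for even `p` the moment is
`e^{-λt} (ct)^p Γ((p + 1) / 2) ∑ₖ (λt / 2)^k / (Γ((k + 1) / 2) Γ((p + k) / 2 + 1))`.
In this series the term `k = 0` is `1 / (√π Γ(p / 2 + 1))`, while the odd `k` give the series of
`I_{(p+1)/2}(λt)` and the even `k ≥ 2` that of `L_{(p+1)/2}(λt)`, both times `(2 / (λt))^{(p-1)/2}`.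
For odd `p` the integrand is odd.
-/

open MeasureTheory Real

/-- The unconditional density law of the random motion `X_0(t)`. -/
noncomputable def p0 (lam c t x : ℝ) : ℝ :=
  lam * Real.exp (-lam * t) / (2 * c) *
    ∑' k : ℕ, (lam / (2 * c) * Real.sqrt (c ^ 2 * t ^ 2 - x ^ 2)) ^ ((k : ℝ) - 1) /
      Real.Gamma (((k : ℝ) + 1) / 2) ^ 2

open Set
open scoped Nat

lemma ofReal_betaIntegrand {x : ℝ} (hx : x ∈ Icc (0 : ℝ) 1) (s t : ℝ) :
    ((x ^ (s - 1) * (1 - x) ^ (t - 1) : ℝ) : ℂ) =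
      (x : ℂ) ^ ((s : ℂ) - 1) * (1 - (x : ℂ)) ^ ((t : ℂ) - 1) := by
  push_cast [Complex.ofReal_cpow hx.1, Complex.ofReal_cpow (sub_nonneg.2 hx.2)]
  rfl

lemma integrableOn_betaIntegrand {s t : ℝ} (hs : 0 < s) (ht : 0 < t) :
    IntegrableOn (fun x : ℝ => x ^ (s - 1) * (1 - x) ^ (t - 1)) (Ioo 0 1) := by
  have h : IntegrableOn
      (fun x : ℝ => RCLike.re ((x : ℂ) ^ ((s : ℂ) - 1) * (1 - (x : ℂ)) ^ ((t : ℂ) - 1)))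
      (Ioc 0 1) :=
    (Complex.betaIntegral_convergent (u := s) (v := t) (by simpa) (by simpa)).1.re
  refine (h.congr_fun (fun x hx => ?_) measurableSet_Ioc).mono_set Ioo_subset_Ioc_self
  simp [← ofReal_betaIntegrand (Ioc_subset_Icc_self hx)]

lemma integral_betaIntegrand {s t : ℝ} (hs : 0 < s) (ht : 0 < t) :
    ∫ x in Ioo (0 : ℝ) 1, x ^ (s - 1) * (1 - x) ^ (t - 1) = ProbabilityTheory.beta s t := by
  have h : Complex.betaIntegral s t =
      ↑(∫ x in (0 : ℝ)..1, x ^ (s - 1) * (1 - x) ^ (t - 1)) := by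
    rw [Complex.betaIntegral, ← intervalIntegral.integral_ofReal]
    refine intervalIntegral.integral_congr fun x hx => (ofReal_betaIntegrand ?_ s t).symm
    rwa [uIcc_of_le zero_le_one] at hx
  rw [ProbabilityTheory.beta_eq_betaIntegralReal s t hs ht, h, Complex.ofReal_re,
    intervalIntegral.integral_of_le zero_le_one, integral_Ioc_eq_integral_Ioo]

section SqrtSubstitution

variable {a : ℝ}

lemma hasDerivWithinAt_const_mul_sqrt {u : ℝ} (hu : 0 < u) (s : Set ℝ) :
    HasDerivWithinAt (fun u => a * √u) (a / (2 * √u)) s u := by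
  simpa [div_eq_mul_inv] using ((hasDerivAt_sqrt hu.ne').const_mul a).hasDerivWithinAt

lemma injOn_const_mul_sqrt (ha : a ≠ 0) : InjOn (fun u => a * √u) (Ioo 0 1) :=
  fun _ hu _ hv h => (sqrt_inj hu.1.le hv.1.le).mp (mul_left_cancel₀ ha h)

lemma image_const_mul_sqrt_Ioo (ha : 0 < a) : (fun u => a * √u) '' Ioo 0 1 = Ioo 0 a := by
  ext x
  constructor
  · rintro ⟨u, ⟨hu0, hu1⟩, rfl⟩
    exact ⟨by positivity, mul_lt_of_lt_one_right ha ((sqrt_lt' one_pos).2 (by simpa using hu1))⟩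
  · rintro ⟨hx0, hxa⟩
    have hxa' : x / a < 1 := (div_lt_one ha).mpr hxa
    refine ⟨(x / a) ^ 2, ⟨by positivity, by nlinarith [div_pos hx0 ha]⟩, ?_⟩
    simp only [sqrt_sq (div_pos hx0 ha).le]
    field_simp

lemma integrableOn_Ioo_iff_comp_const_mul_sqrt (ha : 0 < a) (g : ℝ → ℝ) :
    IntegrableOn g (Ioo 0 a) ↔
      IntegrableOn (fun u => a / (2 * √u) * g (a * √u)) (Ioo 0 1) := by
  rw [← image_const_mul_sqrt_Ioo ha, integrableOn_image_iff_integrableOn_abs_deriv_smul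
    measurableSet_Ioo (fun u hu => hasDerivWithinAt_const_mul_sqrt hu.1 _)
    (injOn_const_mul_sqrt ha.ne')]
  refine integrableOn_congr_fun (fun u hu => ?_) measurableSet_Ioo
  rw [smul_eq_mul, abs_of_pos (by have := hu.1; positivity)]

lemma integral_Ioo_eq_integral_comp_const_mul_sqrt (ha : 0 < a) (g : ℝ → ℝ) :
    ∫ x in Ioo 0 a, g x = ∫ u in Ioo 0 1, a / (2 * √u) * g (a * √u) := by
  rw [← image_const_mul_sqrt_Ioo ha, integral_image_eq_integral_abs_deriv_smul
    measurableSet_Ioo (fun u hu => hasDerivWithinAt_const_mul_sqrt hu.1 _)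
    (injOn_const_mul_sqrt ha.ne')]
  refine setIntegral_congr_fun measurableSet_Ioo (fun u hu => ?_)
  rw [smul_eq_mul, abs_of_pos (by have := hu.1; positivity)]

end SqrtSubstitution

lemma mul_sqrt_subst_eq_betaIntegrand {a u : ℝ} (ha : 0 < a) (hu : u ∈ Ioo 0 1) (s t : ℝ) :
    a / (2 * √u) * ((a * √u) ^ (2 * s - 1) * (a ^ 2 - (a * √u) ^ 2) ^ (t - 1)) =
      a ^ (2 * (s + t) - 2) / 2 * (u ^ (s - 1) * (1 - u) ^ (t - 1)) := by
  obtain ⟨hu0, hu1⟩ := hu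
  have hsqrt : √u = u ^ (1 / 2 : ℝ) := sqrt_eq_rpow u
  have hpow : (a * √u) ^ (2 * s - 1) = a ^ (2 * s - 1) * u ^ (s - 1 / 2) := by
    rw [mul_rpow ha.le (sqrt_nonneg u), hsqrt, ← rpow_mul hu0.le]
    ring_nf
  have hdiff : (a ^ 2 - (a * √u) ^ 2) ^ (t - 1) = a ^ (2 * t - 2) * (1 - u) ^ (t - 1) := by
    rw [mul_pow, sq_sqrt hu0.le, ← mul_one_sub, mul_rpow (by positivity) (by linarith),
      ← rpow_natCast, ← rpow_mul ha.le]
    ring_nf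
  have hinv : a / (2 * √u) = a / 2 * u ^ (-(1 / 2) : ℝ) := by
    rw [rpow_neg hu0.le, ← hsqrt]
    ring
  rw [hpow, hdiff, hinv]
  have ha_exp : a ^ (2 * (s + t) - 2) = a * a ^ (2 * s - 1) * a ^ (2 * t - 2) := by
    rw [show 2 * (s + t) - 2 = 1 + (2 * s - 1) + (2 * t - 2) by ring, rpow_add ha, rpow_add ha,
      rpow_one]
  have hu_exp : u ^ (s - 1) = u ^ (-(1 / 2) : ℝ) * u ^ (s - 1 / 2) := by
    rw [← rpow_add hu0]
    ring_nf
  rw [ha_exp, hu_exp]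
  ring

lemma integrableOn_rpow_mul_sq_sub_sq_rpow {a s t : ℝ} (ha : 0 < a) (hs : 0 < s) (ht : 0 < t) :
    IntegrableOn (fun x => x ^ (2 * s - 1) * (a ^ 2 - x ^ 2) ^ (t - 1)) (Ioo 0 a) := by
  rw [integrableOn_Ioo_iff_comp_const_mul_sqrt ha]
  exact IntegrableOn.congr_fun ((integrableOn_betaIntegrand hs ht).const_mul _)
    (fun u hu => (mul_sqrt_subst_eq_betaIntegrand ha hu s t).symm) measurableSet_Ioo

lemma integral_rpow_mul_sq_sub_sq_rpow {a s t : ℝ} (ha : 0 < a) (hs : 0 < s) (ht : 0 < t) :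
    ∫ x in Ioo 0 a, x ^ (2 * s - 1) * (a ^ 2 - x ^ 2) ^ (t - 1) =
      a ^ (2 * (s + t) - 2) / 2 * ProbabilityTheory.beta s t := by
  rw [integral_Ioo_eq_integral_comp_const_mul_sqrt ha,
    setIntegral_congr_fun measurableSet_Ioo fun u hu => mul_sqrt_subst_eq_betaIntegrand ha hu s t,
    integral_const_mul, integral_betaIntegrand hs ht]

lemma integrableOn_pow_mul_sq_sub_sq_rpow {a : ℝ} (ha : 0 < a) (p k : ℕ) :
    IntegrableOn (fun x => x ^ p * (a ^ 2 - x ^ 2) ^ (((k : ℝ) - 1) / 2)) (Ioo 0 a) := by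
  have h := integrableOn_rpow_mul_sq_sub_sq_rpow ha (s := (p + 1) / 2) (t := (k + 1) / 2)
    (by positivity) (by positivity)
  rw [show 2 * (((p : ℝ) + 1) / 2) - 1 = p by ring,
    show ((k : ℝ) + 1) / 2 - 1 = ((k : ℝ) - 1) / 2 by ring] at h
  simpa only [rpow_natCast] using h

lemma integral_pow_mul_sq_sub_sq_rpow {a : ℝ} (ha : 0 < a) (p k : ℕ) :
    ∫ x in Ioo 0 a, x ^ p * (a ^ 2 - x ^ 2) ^ (((k : ℝ) - 1) / 2) =
      a ^ p * a ^ k / 2 * ProbabilityTheory.beta ((p + 1) / 2) ((k + 1) / 2) := by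
  have h := integral_rpow_mul_sq_sub_sq_rpow ha (s := (p + 1) / 2) (t := (k + 1) / 2)
    (by positivity) (by positivity)
  rw [show 2 * (((p : ℝ) + 1) / 2) - 1 = p by ring,
    show ((k : ℝ) + 1) / 2 - 1 = ((k : ℝ) - 1) / 2 by ring,
    show 2 * (((p : ℝ) + 1) / 2 + ((k : ℝ) + 1) / 2) - 2 = p + k by ring, rpow_add ha] at h
  simpa only [rpow_natCast] using h

lemma Gamma_mul_factorial_div_two_pow_le {x : ℝ} (hx : 1 / 2 ≤ x) (m : ℕ) :
    Gamma x * m ! / 2 ^ m ≤ Gamma (x + m) := by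
  induction m with
  | zero => simp
  | succ n ih =>
    have hxn : 0 < x + n := by positivity
    calc Gamma x * (n + 1)! / 2 ^ (n + 1) = (n + 1) / 2 * (Gamma x * n ! / 2 ^ n) := by
          push_cast [Nat.factorial_succ]; ring
      _ ≤ (x + n) * Gamma (x + n) := by
          gcongr
          linarith
      _ = Gamma (x + ↑(n + 1)) := by
          rw [Nat.cast_succ, ← add_assoc, Gamma_add_one hxn.ne']

lemma summable_pow_div_Gamma_mul_Gamma (w : ℝ) {x y : ℝ} (hx : 1 / 2 ≤ x) (hy : 1 / 2 ≤ y) :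
    Summable fun m : ℕ => w ^ m / (Gamma (x + m) * Gamma (y + m)) := by
  have hΓx := Gamma_pos_of_pos (by linarith : 0 < x)
  have hΓy := Gamma_pos_of_pos (by linarith : 0 < y)
  refine ((summable_pow_div_factorial (4 * |w|)).div_const (Gamma x * Gamma y)).of_norm_bounded
    fun m => ?_
  have hfac : (1 : ℝ) ≤ m ! := mod_cast m.factorial_pos
  have hΓxm := Gamma_mul_factorial_div_two_pow_le hx m
  have hΓym := Gamma_mul_factorial_div_two_pow_le hy m
  calc ‖w ^ m / (Gamma (x + m) * Gamma (y + m))‖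
      = |w| ^ m / (Gamma (x + m) * Gamma (y + m)) := by
        rw [norm_div, norm_pow, Real.norm_eq_abs, Real.norm_of_nonneg (by
          have := Gamma_pos_of_pos (by positivity : 0 < x + m)
          have := Gamma_pos_of_pos (by positivity : 0 < y + m)
          positivity)]
    _ ≤ |w| ^ m / (Gamma x * m ! / 2 ^ m * (Gamma y / 2 ^ m)) := by
        gcongr
        calc Gamma y / 2 ^ m ≤ Gamma y * m ! / 2 ^ m := by
              gcongr; exact le_mul_of_one_le_right hΓy.le hfac
          _ ≤ _ := hΓym
    _ = (4 * |w|) ^ m / m ! / (Gamma x * Gamma y) := by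
        rw [mul_pow, show (4 : ℝ) ^ m = 2 ^ m * 2 ^ m by rw [← mul_pow]; norm_num]
        field_simp

noncomputable def besselStruveTerm (ν z : ℝ) (k : ℕ) : ℝ :=
  (z / 2) ^ k / (Gamma ((k + 1) / 2) * Gamma (ν + (k + 1) / 2))

section BesselStruveTerm

variable {ν z : ℝ}

lemma besselStruveTerm_zero : besselStruveTerm ν z 0 = 1 / (√π * Gamma (ν + 1 / 2)) := by
  simp only [besselStruveTerm, pow_zero, Nat.cast_zero, zero_add, Gamma_one_half_eq]

lemma besselStruveTerm_two_mul (m : ℕ) :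
    besselStruveTerm ν z (2 * m) =
      ((z / 2) ^ 2) ^ m / (Gamma (1 / 2 + m) * Gamma ((ν + 1 / 2) + m)) := by
  rw [besselStruveTerm, pow_mul, show ((↑(2 * m) : ℝ) + 1) / 2 = 1 / 2 + m by push_cast; ring,
    show ν + (1 / 2 + (m : ℝ)) = ν + 1 / 2 + m by ring]

lemma besselStruveTerm_two_mul_add_one (m : ℕ) :
    besselStruveTerm ν z (2 * m + 1) =
      z / 2 * (((z / 2) ^ 2) ^ m / (Gamma (1 + m) * Gamma ((ν + 1) + m))) := by
  rw [besselStruveTerm, pow_succ, pow_mul, show ((↑(2 * m + 1) : ℝ) + 1) / 2 = 1 + m by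
    push_cast; ring, show ν + (1 + (m : ℝ)) = ν + 1 + m by ring]
  ring

lemma summable_besselStruveTerm (hν : 0 ≤ ν) (z : ℝ) : Summable (besselStruveTerm ν z) := by
  refine Summable.even_add_odd ?_ ?_
  · simpa only [besselStruveTerm_two_mul] using
      summable_pow_div_Gamma_mul_Gamma ((z / 2) ^ 2) le_rfl (by linarith)
  · simpa only [besselStruveTerm_two_mul_add_one] using
      (summable_pow_div_Gamma_mul_Gamma ((z / 2) ^ 2) (by norm_num) (by linarith)).mul_left (z / 2)

lemma two_div_rpow_mul_half_rpow (hz : 0 < z) (n : ℕ) :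
    (2 / z) ^ (ν - 1) * (z / 2) ^ ((n : ℝ) + ν - 1) = (z / 2) ^ n := by
  have hz2 : 0 < z / 2 := by positivity
  rw [← inv_div, inv_rpow hz2.le, ← rpow_neg hz2.le, ← rpow_add hz2, ← rpow_natCast]
  ring_nf

lemma besselStruveTerm_two_mul_add_one_eq (hz : 0 < z) (m : ℕ) :
    besselStruveTerm ν z (2 * m + 1) = (2 / z) ^ (ν - 1) *
      ((z / 2) ^ (2 * (m : ℝ) + ν) / (Gamma ((m : ℝ) + 1) * Gamma ((m : ℝ) + ν + 1))) := by
  rw [besselStruveTerm, ← mul_div_assoc,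
    show 2 * (m : ℝ) + ν = (↑(2 * m + 1) : ℝ) + ν - 1 by push_cast; ring,
    two_div_rpow_mul_half_rpow hz]
  congr 3 <;> push_cast <;> ring

lemma besselStruveTerm_two_mul_add_two_eq (hz : 0 < z) (m : ℕ) :
    besselStruveTerm ν z (2 * (m + 1)) = (2 / z) ^ (ν - 1) *
      ((z / 2) ^ (2 * (m : ℝ) + ν + 1) /
        (Gamma ((m : ℝ) + 3 / 2) * Gamma ((m : ℝ) + ν + 3 / 2))) := by
  rw [besselStruveTerm, ← mul_div_assoc,
    show 2 * (m : ℝ) + ν + 1 = (↑(2 * (m + 1)) : ℝ) + ν - 1 by push_cast; ring,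
    two_div_rpow_mul_half_rpow hz]
  congr 3 <;> push_cast <;> ring

lemma tsum_besselStruveTerm (hν : 0 ≤ ν) (hz : 0 < z) :
    ∑' k, besselStruveTerm ν z k =
      1 / (√π * Gamma (ν + 1 / 2)) + (2 / z) ^ (ν - 1) * (besselI ν z + struveL ν z) := by
  have hsum := summable_besselStruveTerm hν z
  have heven : Summable fun m => besselStruveTerm ν z (2 * m) :=
    hsum.comp_injective (mul_right_injective₀ two_ne_zero)
  have hodd : Summable fun m => besselStruveTerm ν z (2 * m + 1) :=
    hsum.comp_injective fun _ _ h => by simpa using h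
  rw [← tsum_even_add_odd heven hodd, heven.tsum_eq_zero_add, mul_zero, besselStruveTerm_zero,
    besselI, struveL, mul_add, ← tsum_mul_left, ← tsum_mul_left]
  simp only [besselStruveTerm_two_mul_add_one_eq hz, besselStruveTerm_two_mul_add_two_eq hz]
  ring

end BesselStruveTerm

lemma Function.Odd.intervalIntegral_eq_zero {f : ℝ → ℝ} (hf : Function.Odd f) (a : ℝ) :
    ∫ x in -a..a, f x = 0 := by
  have h := intervalIntegral.integral_comp_neg (a := -a) (b := a) f
  simp only [hf _, intervalIntegral.integral_neg, neg_neg] at h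
  linarith

lemma Function.Even.intervalIntegral_eq_two_mul {f : ℝ → ℝ} (hf : Function.Even f) (a : ℝ) :
    ∫ x in -a..a, f x = 2 * ∫ x in 0..a, f x := by
  have hneg : ∫ x in -a..0, f x = ∫ x in 0..a, f x := by
    simpa [hf _] using (intervalIntegral.integral_comp_neg (a := 0) (b := a) f).symm
  by_cases hi : IntervalIntegrable f volume 0 a
  · have hi' : IntervalIntegrable f volume (-a) 0 := by
      simpa [hf _] using ((IntervalIntegrable.iff_comp_neg).mp hi).symm
    rw [← intervalIntegral.integral_add_adjacent_intervals hi' hi, hneg, two_mul]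
  · have hi' : ¬ IntervalIntegrable f volume (-a) a := fun h =>
      hi (h.mono_set (uIcc_subset_uIcc (by rcases le_total 0 a with h | h <;> simp [h])
        right_mem_uIcc))
    rw [intervalIntegral.integral_undef hi', intervalIntegral.integral_undef hi, mul_zero]

noncomputable def p0Term (w a : ℝ) (k : ℕ) (x : ℝ) : ℝ :=
  w ^ k / Gamma ((k + 1) / 2) ^ 2 * (a ^ 2 - x ^ 2) ^ (((k : ℝ) - 1) / 2)

lemma p0_eq_tsum {lam c : ℝ} (hlam : 0 < lam) (hc : 0 < c) (t : ℝ) {x : ℝ}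
    (hx : x ^ 2 ≤ (c * t) ^ 2) :
    p0 lam c t x = exp (-lam * t) * ∑' k, p0Term (lam / (2 * c)) (c * t) k x := by
  have hw : 0 < lam / (2 * c) := by positivity
  rw [p0, ← tsum_mul_left, ← tsum_mul_left]
  refine tsum_congr fun k => ?_
  rw [p0Term, mul_rpow hw.le (sqrt_nonneg _), sqrt_eq_rpow, ← rpow_mul (by nlinarith),
    rpow_sub_one hw.ne', rpow_natCast]
  field_simp

lemma p0Term_nonneg {w a x : ℝ} (hw : 0 ≤ w) (hx : x ^ 2 ≤ a ^ 2) (k : ℕ) :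
    0 ≤ p0Term w a k x := by
  have : 0 ≤ a ^ 2 - x ^ 2 := sub_nonneg.2 hx
  unfold p0Term
  positivity

lemma integrableOn_pow_mul_p0Term {a : ℝ} (ha : 0 < a) (w : ℝ) (p k : ℕ) :
    IntegrableOn (fun x => x ^ p * p0Term w a k x) (Ioo 0 a) :=
  IntegrableOn.congr_fun
    ((integrableOn_pow_mul_sq_sub_sq_rpow ha p k).const_mul (w ^ k / Gamma ((k + 1) / 2) ^ 2))
    (fun _ _ => mul_left_comm _ _ _) measurableSet_Ioo

lemma integral_pow_mul_p0Term {a : ℝ} (ha : 0 < a) (w : ℝ) (p k : ℕ) :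
    ∫ x in Ioo 0 a, x ^ p * p0Term w a k x =
      a ^ p * Gamma ((p + 1) / 2) / 2 * besselStruveTerm ((p + 1) / 2) (2 * w * a) k := by
  have hΓ : Gamma ((k + 1) / 2) ≠ 0 := (Gamma_pos_of_pos (by positivity)).ne'
  simp_rw [p0Term, mul_left_comm _ (_ / _)]
  rw [integral_const_mul, integral_pow_mul_sq_sub_sq_rpow ha, ProbabilityTheory.beta,
    besselStruveTerm]
  field_simp
  ring

lemma integral_pow_mul_p0_of_even {lam c t : ℝ} (hlam : 0 < lam) (hc : 0 < c) (ht : 0 < t)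
    {p : ℕ} (hp : Even p) :
    ∫ x in -(c * t)..c * t, x ^ p * p0 lam c t x = exp (-lam * t) * (c * t) ^ p *
      Gamma ((p + 1) / 2) * ∑' k, besselStruveTerm ((p + 1) / 2) (lam * t) k := by
  set a := c * t with ha_def
  have ha : 0 < a := mul_pos hc ht
  set w := lam / (2 * c) with hw_def
  have hz : 2 * w * a = lam * t := by rw [hw_def, ha_def]; field_simp
  set F : ℕ → ℝ → ℝ := fun k x => x ^ p * p0Term w a k x
  have heven : Function.Even fun x => x ^ p * p0 lam c t x := fun x => by
    simp only [p0, hp.neg_pow, neg_sq]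
  have hseries : ∀ x ∈ Ioo 0 a, x ^ p * p0 lam c t x = exp (-lam * t) * ∑' k, F k x := by
    intro x hx
    rw [p0_eq_tsum hlam hc t (by nlinarith [hx.1, hx.2]), mul_left_comm, ← tsum_mul_left]
  have hF_int (k : ℕ) : ∫ x in Ioo 0 a, F k x =
      a ^ p * Gamma ((p + 1) / 2) / 2 * besselStruveTerm ((p + 1) / 2) (lam * t) k := by
    rw [integral_pow_mul_p0Term ha w p k, hz]
  have hF_norm (k : ℕ) : ∫ x in Ioo 0 a, ‖F k x‖ = ∫ x in Ioo 0 a, F k x :=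
    setIntegral_congr_fun measurableSet_Ioo fun x hx => norm_of_nonneg <| mul_nonneg
      (pow_nonneg hx.1.le p) (p0Term_nonneg (by positivity) (by nlinarith [hx.1, hx.2]) k)
  have hF_summable : Summable fun k => ∫ x in Ioo 0 a, ‖F k x‖ := by
    simp_rw [hF_norm, hF_int]
    exact (summable_besselStruveTerm (by positivity) (lam * t)).mul_left _
  calc ∫ x in -a..a, x ^ p * p0 lam c t x
      = 2 * ∫ x in Ioo 0 a, x ^ p * p0 lam c t x := by
        rw [heven.intervalIntegral_eq_two_mul, intervalIntegral.integral_of_le ha.le,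
          integral_Ioc_eq_integral_Ioo]
    _ = 2 * (exp (-lam * t) * ∑' k, ∫ x in Ioo 0 a, F k x) := by
        rw [setIntegral_congr_fun measurableSet_Ioo hseries, integral_const_mul,
          integral_tsum_of_summable_integral_norm (integrableOn_pow_mul_p0Term ha w p) hF_summable]
    _ = _ := by
        simp_rw [hF_int]
        rw [tsum_mul_left]
        ring

theorem stmt10_general (lam c t : ℝ) (hlam : 0 < lam) (hc : 0 < c) (ht : 0 < t)
    (p : ℕ) :
    (Even p →
      ∫ x in (-(c * t))..(c * t), x ^ p * p0 lam c t x =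
        Real.exp (-lam * t) * (2 / (lam * t)) ^ (((p : ℝ) - 1) / 2) * (c * t) ^ p *
            Real.Gamma (((p : ℝ) + 1) / 2) *
            (besselI (((p : ℝ) + 1) / 2) (lam * t) + struveL (((p : ℝ) + 1) / 2) (lam * t)) +
          Real.exp (-lam * t) * (c * t) ^ p * Real.Gamma (((p : ℝ) + 1) / 2) /
            (Real.sqrt π * Real.Gamma ((p : ℝ) / 2 + 1))) ∧
    (Odd p → ∫ x in (-(c * t))..(c * t), x ^ p * p0 lam c t x = 0) := by
  refine ⟨fun hp => ?_, fun hp => ?_⟩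
  · rw [integral_pow_mul_p0_of_even hlam hc ht hp,
      tsum_besselStruveTerm (by positivity) (mul_pos hlam ht),
      show ((p : ℝ) + 1) / 2 - 1 = ((p : ℝ) - 1) / 2 by ring,
      show ((p : ℝ) + 1) / 2 + 1 / 2 = (p : ℝ) / 2 + 1 by ring]
    ring
  · refine Function.Odd.intervalIntegral_eq_zero (fun x => ?_) _
    simp only [p0, hp.neg_pow, neg_sq, neg_mul]

/-- The `p`-th moments of the random motion `X_0(t)`: for `p` even positive,
`∫_{−ct}^{ct} x^p p^0(x,t) dx = e^{−λt}(2/(λt))^{(p−1)/2}(ct)^p Γ((p+1)/2)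
  [I_{(p+1)/2}(λt) + L_{(p+1)/2}(λt)] + e^{−λt}(ct)^p Γ((p+1)/2)/(√π Γ(p/2+1))`,
while for `p` odd positive the integral vanishes. -/
theorem stmt10 (lam c t : ℝ) (hlam : 0 < lam) (hc : 0 < c) (ht : 0 < t)
    (p : ℕ) (hp : 0 < p) :
    (Even p →
      ∫ x in (-(c * t))..(c * t), x ^ p * p0 lam c t x =
        Real.exp (-lam * t) * (2 / (lam * t)) ^ (((p : ℝ) - 1) / 2) * (c * t) ^ p *
            Real.Gamma (((p : ℝ) + 1) / 2) *
            (besselI (((p : ℝ) + 1) / 2) (lam * t) + struveL (((p : ℝ) + 1) / 2) (lam * t)) +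
          Real.exp (-lam * t) * (c * t) ^ p * Real.Gamma (((p : ℝ) + 1) / 2) /
            (Real.sqrt π * Real.Gamma ((p : ℝ) / 2 + 1))) ∧
    (Odd p → ∫ x in (-(c * t))..(c * t), x ^ p * p0 lam c t x = 0) :=
  stmt10_general lam c t hlam hc ht p
end
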